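/- For any integer k ≥ 2 and any nonnegative k-submodular function f : (k+1)^V → ℝ≥0, there exists x ∈ (k+1)^V with supp(x) = V such that f(x) ≥ f(y) for every y ∈ (k+1)^V; that is, the maximum of f is attained at a full partition of V. -/

import Mathlib

/-!
Among the maximizers of `f`, take one with the largest support. If it vanished at some `e`,
set `e` to two distinct nonzero labels `i ≠ j` (possible as `k ≥ 2`): the `⊔` and the `⊓` of
the two updates both give back `x`, so `k`-submodularity yields
`2 f x ≤ f (x[e ↦ i]) + f (x[e ↦ j])`. Hence `x[e ↦ i]` is again a maximizer, with larger support.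
-/

namespace Stmt1

variable {V : Type*}

/-- `(x ⊓ y)(e) = x(e)` if `x(e) = y(e)` and `0` otherwise. -/
def kinf {k : ℕ} (x y : V → Fin (k+1)) : V → Fin (k+1) :=
  fun e => if x e = y e then x e else 0

/-- `(x ⊔ y)(e) = x(e)` if `y(e) ∈ {0, x(e)}`; `= y(e)` if `x(e) = 0 ≠ y(e)`;
`= 0` if `x(e), y(e)` are distinct and both nonzero. -/
def ksup {k : ℕ} (x y : V → Fin (k+1)) : V → Fin (k+1) :=
  fun e => if y e = 0 ∨ y e = x e then x e else if x e = 0 then y e else 0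

def KSubmodular {k : ℕ} (f : (V → Fin (k+1)) → ℝ) : Prop :=
  ∀ x y : V → Fin (k+1), f x + f y ≥ f (ksup x y) + f (kinf x y)

def supp [Fintype V] {k : ℕ} (x : V → Fin (k+1)) : Finset V :=
  Finset.univ.filter fun e => x e ≠ 0

section Update

variable [DecidableEq V] {k : ℕ} {x : V → Fin (k+1)} {e : V} {i j : Fin (k+1)}

theorem supp_update_of_eq_zero [Fintype V] (he : x e = 0) (hi : i ≠ 0) :
    supp (Function.update x e i) = insert e (supp x) := by
  ext a
  by_cases ha : a = e
  · subst ha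
    simp [supp, hi]
  · simp [supp, ha]

theorem ksup_update_update (he : x e = 0) (hi : i ≠ 0) (hj : j ≠ 0) (hij : i ≠ j) :
    ksup (Function.update x e i) (Function.update x e j) = x := by
  funext a
  by_cases ha : a = e
  · subst ha
    simp [ksup, hi, hj, hij.symm, he]
  · simp [ksup, ha]

theorem kinf_update_update (he : x e = 0) (hij : i ≠ j) :
    kinf (Function.update x e i) (Function.update x e j) = x := by
  funext a
  by_cases ha : a = e
  · subst ha
    simp [kinf, hij, he]
  · simp [kinf, ha]

theorem KSubmodular.two_mul_le_add_update {f : (V → Fin (k+1)) → ℝ} (hf : KSubmodular f)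
    (he : x e = 0) (hi : i ≠ 0) (hj : j ≠ 0) (hij : i ≠ j) :
    2 * f x ≤ f (Function.update x e i) + f (Function.update x e j) := by
  have := hf (Function.update x e i) (Function.update x e j)
  rw [ksup_update_update he hi hj hij, kinf_update_update he hij] at this
  linarith

theorem KSubmodular.isMaxOn_update {f : (V → Fin (k+1)) → ℝ} (hf : KSubmodular f)
    (hx : IsMaxOn f Set.univ x) (he : x e = 0) (hi : i ≠ 0) (hj : j ≠ 0) (hij : i ≠ j) :
    IsMaxOn f Set.univ (Function.update x e i) := by
  have hsum := hf.two_mul_le_add_update he hi hj hij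
  have hxj := isMaxOn_univ_iff.mp hx (Function.update x e j)
  refine isMaxOn_univ_iff.mpr fun y => ?_
  linarith [isMaxOn_univ_iff.mp hx y]

end Update

theorem stmt1_general {k : ℕ} (hk : 2 ≤ k) [Fintype V] [DecidableEq V]
    (f : (V → Fin (k+1)) → ℝ) (hf : KSubmodular f) :
    ∃ x : V → Fin (k+1), (∀ e, x e ≠ 0) ∧ ∀ y : V → Fin (k+1), f y ≤ f x := by
  obtain ⟨x₀, -, hx₀⟩ := Finset.univ.exists_max_image f Finset.univ_nonempty
  obtain ⟨x, hxmax, hxsupp⟩ := Set.exists_max_image {x | IsMaxOn f Set.univ x}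
    (fun x => (supp x).card) (Set.toFinite _) ⟨x₀, fun y _ => hx₀ y (Finset.mem_univ y)⟩
  refine ⟨x, fun e he => ?_, isMaxOn_univ_iff.mp hxmax⟩
  have hi : (⟨1, by omega⟩ : Fin (k+1)) ≠ 0 := by simp [Fin.ext_iff]
  have hj : (⟨2, by omega⟩ : Fin (k+1)) ≠ 0 := by simp [Fin.ext_iff]
  have hsupp := hxsupp _ (hf.isMaxOn_update hxmax he hi hj (by simp))
  rw [supp_update_of_eq_zero he hi, Finset.card_insert_of_notMem (by simp [supp, he])] at hsupp
  omega

/-- For `k ≥ 2` and a nonnegative `k`-submodular function `f`, the maximum of `f`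
is attained at a point with full support (a partition of `V`). -/
theorem stmt1 {k : ℕ} (hk : 2 ≤ k) [Fintype V] [DecidableEq V]
    (f : (V → Fin (k+1)) → ℝ) (hnn : ∀ x, 0 ≤ f x) (hf : KSubmodular f) :
    ∃ x : V → Fin (k+1), (∀ e, x e ≠ 0) ∧ ∀ y : V → Fin (k+1), f y ≤ f x :=
  stmt1_general hk f hf

end Stmt1
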